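/- arXiv:2011.11477 — 2 statements merged into one kernel-verified Lean document; each statement's English description precedes it below -/
import Mathlib

section
/- Let X ∈ ℝ^{n×p}, let C_xx = Σ_{j=1}^p λⱼ uⱼuⱼᵀ be symmetric positive semidefinite with λ₁ ≥ … ≥ λ_p ≥ 0, let k < min(n,p), let (1/n)XᵀX have top-k eigenvalues λ̃₁ ≥ … ≥ λ̃_k > 0 with orthonormal eigenvectors ũᵢ, let X_{PCA,k} be the rank-k truncated SVD of X, and let E = C_xx − (1/n)XᵀX with ‖E‖_op < λ_k. Then Σ_{i=1}^k (λᵢ/(λᵢ + ‖E‖_op)) ⟨ũᵢ, uᵢ⟩² ≤ tr(((1/n)X_{PCA,k}ᵀX_{PCA,k})^† C_xx) ≤ Σ_{i=1}^k [ (λᵢ/(λᵢ − ‖E‖_op)) ⟨ũᵢ, uᵢ⟩² + Σ_{j=1, j≠i}^p (λⱼ/λ̃ᵢ) ⟨ũᵢ, uⱼ⟩² ]. -/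
/- STATEMENT 9: Let X ∈ ℝ^{n×p}, C_xx = Σⱼ λⱼuⱼuⱼᵀ symmetric PSD with λ₁ ≥ … ≥ λ_p ≥ 0,
k < min(n,p), (1/n)XᵀX with top-k eigenvalues λ̃₁ ≥ … ≥ λ̃_k > 0 and orthonormal
eigenvectors ũᵢ, X_{PCA,k} the rank-k truncated SVD of X, and E = C_xx − (1/n)XᵀX with
‖E‖_op < λ_k. Then
Σ_{i=1}^k (λᵢ/(λᵢ+‖E‖_op)) ⟨ũᵢ,uᵢ⟩² ≤ tr(((1/n)X_{PCA,k}ᵀX_{PCA,k})^† C_xx)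
  ≤ Σ_{i=1}^k [ (λᵢ/(λᵢ−‖E‖_op)) ⟨ũᵢ,uᵢ⟩² + Σ_{j≠i} (λⱼ/λ̃ᵢ) ⟨ũᵢ,uⱼ⟩² ]. -/

open Matrix
open scoped BigOperators Matrix.Norms.L2Operator

/-- `P` is the Moore–Penrose pseudoinverse of `A`. -/
def IsMoorePenrose {m n : Type*} [Fintype m] [Fintype n]
    (A : Matrix m n ℝ) (P : Matrix n m ℝ) : Prop :=
  A * P * A = A ∧ P * A * P = P ∧ (A * P)ᵀ = A * P ∧ (P * A)ᵀ = P * A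

/-!
Weyl's inequality `|λᵢ - λ̃ᵢ| ≤ ‖E‖` comes from a Courant–Fischer test vector: a nonzero `x` in
the span of the top `i + 1` eigenvectors of one matrix `B` and orthogonal to the top `i`
eigenvectors of another matrix `A` has `xᵀBx ≥ bᵢ ‖x‖²` and `xᵀAx ≤ aᵢ ‖x‖²`, while the two
quadratic forms differ by at most `‖A - B‖ ‖x‖²`.
Moore–Penrose inverses are unique, so the pseudoinverse of `∑_{i<k} λ̃ᵢ ũᵢũᵢᵀ` is
`∑_{i<k} λ̃ᵢ⁻¹ ũᵢũᵢᵀ` and the trace equals `∑_{i<k} ∑ⱼ (λⱼ / λ̃ᵢ) ⟨ũᵢ, uⱼ⟩²`. Weyl's inequality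
bounds the diagonal terms `j = i`; the off-diagonal terms are nonnegative.
-/

namespace Matrix

variable {ι κ : Type*}

def spectralSum (s : Finset κ) (d : κ → ℝ) (w : κ → ι → ℝ) : Matrix ι ι ℝ :=
  ∑ i ∈ s, d i • vecMulVec (w i) (w i)

theorem spectralSum_congr {s : Finset κ} {d e : κ → ℝ} (h : ∀ i ∈ s, d i = e i)
    (w : κ → ι → ℝ) : spectralSum s d w = spectralSum s e w :=
  Finset.sum_congr rfl fun i hi => by rw [h i hi]

theorem transpose_spectralSum (s : Finset κ) (d : κ → ℝ) (w : κ → ι → ℝ) :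
    (spectralSum s d w)ᵀ = spectralSum s d w := by
  simp only [spectralSum, transpose_sum, transpose_smul, transpose_vecMulVec]

variable [Fintype ι]

theorem dotProduct_spectralSum_mulVec (s : Finset κ) (d : κ → ℝ) (w : κ → ι → ℝ) (x : ι → ℝ) :
    x ⬝ᵥ spectralSum s d w *ᵥ x = ∑ i ∈ s, d i * (w i ⬝ᵥ x) ^ 2 := by
  simp only [spectralSum, sum_mulVec, dotProduct_sum, smul_mulVec, vecMulVec_mulVec,
    dotProduct_smul, op_smul_eq_smul, smul_eq_mul]
  exact Finset.sum_congr rfl fun i _ => by rw [dotProduct_comm x (w i)]; ring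

theorem trace_spectralSum_mul_spectralSum (s t : Finset κ) (d e : κ → ℝ) (w v : κ → ι → ℝ) :
    trace (spectralSum s d w * spectralSum t e v)
      = ∑ i ∈ s, ∑ j ∈ t, d i * e j * (w i ⬝ᵥ v j) ^ 2 := by
  simp only [spectralSum, Finset.sum_mul_sum, smul_mul_smul, vecMulVec_mul_vecMulVec, trace_sum,
    trace_smul, trace_vecMulVec, dotProduct_smul, smul_eq_mul, sq]

theorem spectralSum_mul_spectralSum [DecidableEq κ] {w : κ → ι → ℝ}
    (hw : ∀ s t, w s ⬝ᵥ w t = if s = t then 1 else 0) (s : Finset κ) (d e : κ → ℝ) :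
    spectralSum s d w * spectralSum s e w = spectralSum s (d * e) w := by
  simp only [spectralSum, Finset.sum_mul_sum, smul_mul_smul, vecMulVec_mul_vecMulVec, hw,
    ite_smul, one_smul, zero_smul, apply_ite (vecMulVec _), vecMulVec_zero, smul_ite, smul_zero,
    Finset.sum_ite_eq]
  exact Finset.sum_congr rfl fun i hi => by rw [if_pos hi, Pi.mul_apply]

theorem isMoorePenrose_spectralSum_inv [DecidableEq κ] {w : κ → ι → ℝ}
    (hw : ∀ s t, w s ⬝ᵥ w t = if s = t then 1 else 0) {s : Finset κ} {d : κ → ℝ}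
    (hd : ∀ i ∈ s, d i ≠ 0) : IsMoorePenrose (spectralSum s d w) (spectralSum s d⁻¹ w) := by
  simp only [IsMoorePenrose, spectralSum_mul_spectralSum hw, transpose_spectralSum, and_true]
  exact ⟨spectralSum_congr (fun i hi => inv_mul_cancel_right₀ (hd i hi) (d i)) w,
    spectralSum_congr (fun i hi => mul_inv_cancel_right₀ (hd i hi) (d i)⁻¹) w⟩

section Orthonormal

variable [DecidableEq ι] {v : ι → ι → ℝ}

theorem mul_transpose_of_orthonormal (hv : ∀ s t, v s ⬝ᵥ v t = if s = t then 1 else 0) :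
    of v * (of v)ᵀ = 1 := by
  ext s t
  simpa [mul_apply, one_apply, dotProduct] using hv s t

theorem sum_sq_dotProduct_of_orthonormal (hv : ∀ s t, v s ⬝ᵥ v t = if s = t then 1 else 0)
    (x : ι → ℝ) : ∑ j, (v j ⬝ᵥ x) ^ 2 = x ⬝ᵥ x := by
  have hV : (of v)ᵀ * of v = 1 := mul_eq_one_comm.mp (mul_transpose_of_orthonormal hv)
  calc ∑ j, (v j ⬝ᵥ x) ^ 2 = (of v *ᵥ x) ⬝ᵥ (of v *ᵥ x) := by simp only [dotProduct, sq]; rfl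
    _ = x ⬝ᵥ x := by
      rw [dotProduct_mulVec, ← mulVec_transpose, mulVec_mulVec, hV, one_mulVec]

theorem dotProduct_spectralSum_mulVec_le (hv : ∀ s t, v s ⬝ᵥ v t = if s = t then 1 else 0)
    {d : ι → ℝ} {r : ℝ} {x : ι → ℝ} (hd : ∀ j, v j ⬝ᵥ x ≠ 0 → d j ≤ r) :
    x ⬝ᵥ spectralSum Finset.univ d v *ᵥ x ≤ r * (x ⬝ᵥ x) := by
  rw [dotProduct_spectralSum_mulVec, ← sum_sq_dotProduct_of_orthonormal hv, Finset.mul_sum]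
  refine Finset.sum_le_sum fun j _ => ?_
  by_cases hj : v j ⬝ᵥ x = 0
  · simp [hj]
  · exact mul_le_mul_of_nonneg_right (hd j hj) (sq_nonneg _)

theorem le_dotProduct_spectralSum_mulVec (hv : ∀ s t, v s ⬝ᵥ v t = if s = t then 1 else 0)
    {d : ι → ℝ} {r : ℝ} {x : ι → ℝ} (hd : ∀ j, v j ⬝ᵥ x ≠ 0 → r ≤ d j) :
    r * (x ⬝ᵥ x) ≤ x ⬝ᵥ spectralSum Finset.univ d v *ᵥ x := by
  rw [dotProduct_spectralSum_mulVec, ← sum_sq_dotProduct_of_orthonormal hv, Finset.mul_sum]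
  refine Finset.sum_le_sum fun j _ => ?_
  by_cases hj : v j ⬝ᵥ x = 0
  · simp [hj]
  · exact mul_le_mul_of_nonneg_right (hd j hj) (sq_nonneg _)

end Orthonormal

theorem abs_dotProduct_mulVec_le_l2_opNorm [DecidableEq ι] (A : Matrix ι ι ℝ) (x : ι → ℝ) :
    |x ⬝ᵥ A *ᵥ x| ≤ ‖A‖ * (x ⬝ᵥ x) := by
  have hx : ‖WithLp.toLp 2 x‖ ^ 2 = x ⬝ᵥ x := by
    rw [← real_inner_self_eq_norm_sq, EuclideanSpace.inner_toLp_toLp, star_trivial]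
  calc |x ⬝ᵥ A *ᵥ x| = |inner ℝ (WithLp.toLp 2 x) (WithLp.toLp 2 (A *ᵥ x))| := by
        rw [EuclideanSpace.inner_toLp_toLp, star_trivial, dotProduct_comm]
    _ ≤ ‖WithLp.toLp 2 x‖ * ‖WithLp.toLp 2 (A *ᵥ x)‖ := abs_real_inner_le_norm _ _
    _ ≤ ‖WithLp.toLp 2 x‖ * (‖A‖ * ‖WithLp.toLp 2 x‖) := by
        gcongr; exact l2_opNorm_mulVec A (WithLp.toLp 2 x)
    _ = ‖A‖ * (x ⬝ᵥ x) := by rw [← hx]; ring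

theorem exists_ne_zero_forall_lt_mulVec_eq_zero {K : Type*} [Field K] [LinearOrder ι]
    (M : Matrix ι ι K) (i : ι) :
    ∃ c ≠ 0, (∀ m, i < m → c m = 0) ∧ ∀ j < i, (M *ᵥ c) j = 0 := by
  -- Row `i` of `N` vanishes, so `N` has a nonzero kernel vector `c`; the rows `j > i` force
  -- `c m = 0` for `m > i`, and on such `c` the rows `j < i` act as those of `M`.
  let N : Matrix ι ι K := of fun j m =>
    if j < i then (if m ≤ i then M j m else 0) else if i < j then (if j = m then 1 else 0) else 0
  obtain ⟨c, hc, hNc⟩ := (exists_mulVec_eq_zero_iff (M := N)).mpr <|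
    det_eq_zero_of_row_eq_zero i fun m => by simp [N]
  have hsupp : ∀ m, i < m → c m = 0 := fun m him => by
    simpa [N, mulVec, dotProduct, him, not_lt_of_gt him] using congrFun hNc m
  refine ⟨c, hc, hsupp, fun j hj => ?_⟩
  calc (M *ᵥ c) j = (N *ᵥ c) j := Finset.sum_congr rfl fun m _ => by
        by_cases hm : m ≤ i
        · simp [N, hj, hm]
        · simp [N, hj, hm, hsupp m (lt_of_not_ge hm)]
    _ = 0 := congrFun hNc j

theorem le_add_l2_opNorm_sub_of_spectralSum [LinearOrder ι] {a b : ι → ℝ} {v w : ι → ι → ℝ}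
    (hv : ∀ s t, v s ⬝ᵥ v t = if s = t then 1 else 0)
    (hw : ∀ s t, w s ⬝ᵥ w t = if s = t then 1 else 0) (ha : Antitone a) (hb : Antitone b)
    (i : ι) :
    b i ≤ a i + ‖spectralSum Finset.univ a v - spectralSum Finset.univ b w‖ := by
  obtain ⟨c, hc, hc_supp, hc_orth⟩ := exists_ne_zero_forall_lt_mulVec_eq_zero (of v * (of w)ᵀ) i
  set x := (of w)ᵀ *ᵥ c
  have hwx : ∀ m, w m ⬝ᵥ x = c m := congrFun <| show of w *ᵥ x = c by
    rw [mulVec_mulVec, mul_transpose_of_orthonormal hw, one_mulVec]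
  have hvx : ∀ j < i, v j ⬝ᵥ x = 0 := fun j hj => by
    rw [← hc_orth j hj, ← mulVec_mulVec]; rfl
  have hxx : 0 < x ⬝ᵥ x := by
    obtain ⟨m, hm⟩ := Function.ne_iff.mp hc
    rw [← sum_sq_dotProduct_of_orthonormal hw]
    exact Finset.sum_pos' (fun _ _ => sq_nonneg _)
      ⟨m, Finset.mem_univ _, by rw [hwx]; exact sq_pos_of_ne_zero hm⟩
  have hA : x ⬝ᵥ spectralSum Finset.univ a v *ᵥ x ≤ a i * (x ⬝ᵥ x) :=
    dotProduct_spectralSum_mulVec_le hv fun j hj => ha (not_lt.mp fun hji => hj (hvx j hji))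
  have hB : b i * (x ⬝ᵥ x) ≤ x ⬝ᵥ spectralSum Finset.univ b w *ᵥ x :=
    le_dotProduct_spectralSum_mulVec hw fun m hm =>
      hb (not_lt.mp fun him => hm (by rw [hwx, hc_supp m him]))
  have hAB := abs_dotProduct_mulVec_le_l2_opNorm
    (spectralSum Finset.univ a v - spectralSum Finset.univ b w) x
  rw [sub_mulVec, dotProduct_sub] at hAB
  refine le_of_mul_le_mul_right ?_ hxx
  linarith [neg_abs_le
    (x ⬝ᵥ spectralSum Finset.univ a v *ᵥ x - x ⬝ᵥ spectralSum Finset.univ b w *ᵥ x)]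

theorem abs_sub_le_l2_opNorm_sub_of_spectralSum [LinearOrder ι] {a b : ι → ℝ}
    {v w : ι → ι → ℝ} (hv : ∀ s t, v s ⬝ᵥ v t = if s = t then 1 else 0)
    (hw : ∀ s t, w s ⬝ᵥ w t = if s = t then 1 else 0) (ha : Antitone a) (hb : Antitone b)
    (i : ι) :
    |a i - b i| ≤ ‖spectralSum Finset.univ a v - spectralSum Finset.univ b w‖ := by
  have hab := le_add_l2_opNorm_sub_of_spectralSum hv hw ha hb i
  have hba := le_add_l2_opNorm_sub_of_spectralSum hw hv hb ha i
  rw [norm_sub_rev] at hba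
  exact abs_sub_le_iff.mpr ⟨by linarith, by linarith⟩

end Matrix

theorem IsMoorePenrose.unique {m n : Type*} [Fintype m] [Fintype n] {A : Matrix m n ℝ}
    {P Q : Matrix n m ℝ} (hP : IsMoorePenrose A P) (hQ : IsMoorePenrose A Q) : P = Q := by
  obtain ⟨hP1, hP2, hP3, hP4⟩ := hP
  obtain ⟨hQ1, hQ2, hQ3, hQ4⟩ := hQ
  have hP_eq : P = P * A * Q := calc
    P = P * (A * P)ᵀ := by rw [hP3, ← Matrix.mul_assoc, hP2]
    _ = P * ((A * Q) * (A * P))ᵀ := by rw [← Matrix.mul_assoc (A * Q), hQ1]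
    _ = P * (A * P * (A * Q)) := by rw [transpose_mul, hP3, hQ3]
    _ = P * A * Q := by
      rw [show P * (A * P * (A * Q)) = P * A * P * A * Q by simp only [Matrix.mul_assoc], hP2]
  have hQ_eq : Q = P * A * Q := calc
    Q = (Q * A)ᵀ * Q := by rw [hQ4, hQ2]
    _ = ((Q * A) * (P * A))ᵀ * Q := by rw [Matrix.mul_assoc Q, ← Matrix.mul_assoc A, hP1]
    _ = P * A * (Q * A) * Q := by rw [transpose_mul, hP4, hQ4]
    _ = P * A * Q := by rw [Matrix.mul_assoc (P * A), hQ2]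
  exact hP_eq.trans hQ_eq.symm

section DiagonalTerm

variable {ι : Type*} [Fintype ι] {a c : ι → ℝ} {μ e : ℝ} {i : ι}

theorem div_add_mul_le_sum_div_mul (ha : ∀ j, 0 ≤ a j) (hc : ∀ j, 0 ≤ c j) (hμ : 0 < μ)
    (hμi : μ ≤ a i + e) : a i / (a i + e) * c i ≤ ∑ j, a j / μ * c j :=
  calc a i / (a i + e) * c i ≤ a i / μ * c i := by
        gcongr ?_ * _
        · exact hc i
        · exact div_le_div_of_nonneg_left (ha i) hμ hμi
    _ ≤ ∑ j, a j / μ * c j :=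
        Finset.single_le_sum (f := fun j => a j / μ * c j)
          (fun j _ => mul_nonneg (div_nonneg (ha j) hμ.le) (hc j)) (Finset.mem_univ i)

theorem sum_div_mul_le_div_sub_mul_add [DecidableEq ι] (hai : 0 ≤ a i) (hci : 0 ≤ c i)
    (he : 0 < a i - e) (hμi : a i - e ≤ μ) :
    ∑ j, a j / μ * c j
      ≤ a i / (a i - e) * c i + ∑ j ∈ Finset.univ.filter (· ≠ i), a j / μ * c j := by
  rw [Finset.filter_ne', ← Finset.add_sum_erase _ _ (Finset.mem_univ i)]
  gcongr ?_ + _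
  exact mul_le_mul_of_nonneg_right (div_le_div_of_nonneg_left hai he hμi) hci

end DiagonalTerm

theorem pca_ols_variance_trace_sandwich
    (n p k : ℕ) (hk : k < min n p)
    (X : Matrix (Fin n) (Fin p) ℝ)
    (Cxx : Matrix (Fin p) (Fin p) ℝ)
    -- eigendecomposition of the population covariance, eigenvalues sorted decreasingly
    (lam : Fin p → ℝ) (u : Fin p → Fin p → ℝ)
    (hlam_anti : ∀ i j : Fin p, i ≤ j → lam j ≤ lam i)
    (hlam_nonneg : ∀ j, 0 ≤ lam j)
    (hu_orth : ∀ i j, u i ⬝ᵥ u j = if i = j then (1 : ℝ) else 0)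
    (hCxx : Cxx = ∑ j, lam j • vecMulVec (u j) (u j))
    -- eigendecomposition of the empirical covariance (1/n) XᵀX, with positive top-k eigenvalues
    (lamt : Fin p → ℝ) (ut : Fin p → Fin p → ℝ)
    (hlamt_anti : ∀ i j : Fin p, i ≤ j → lamt j ≤ lamt i)
    (hlamt_pos : ∀ i : Fin p, (i : ℕ) < k → 0 < lamt i)
    (hut_orth : ∀ i j, ut i ⬝ᵥ ut j = if i = j then (1 : ℝ) else 0)
    (hemp : (1 / (n : ℝ)) • (Xᵀ * X) = ∑ j, lamt j • vecMulVec (ut j) (ut j))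
    -- the rank-k truncated SVD of X and the pseudoinverse of (1/n) X_{PCA,k}ᵀ X_{PCA,k}
    (Xk : Matrix (Fin n) (Fin p) ℝ)
    (hXk : (1 / (n : ℝ)) • (Xkᵀ * Xk)
      = ∑ i ∈ Finset.univ.filter (fun i : Fin p => (i : ℕ) < k), lamt i • vecMulVec (ut i) (ut i))
    (Bdag : Matrix (Fin p) (Fin p) ℝ)
    (hBdag : IsMoorePenrose ((1 / (n : ℝ)) • (Xkᵀ * Xk)) Bdag)
    -- the perturbation and the spectral condition
    (E : Matrix (Fin p) (Fin p) ℝ)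
    (hE : E = Cxx - (1 / (n : ℝ)) • (Xᵀ * X))
    (hEk : ‖E‖ < lam ⟨k - 1, by omega⟩) :
    (∑ i ∈ Finset.univ.filter (fun i : Fin p => (i : ℕ) < k),
        (lam i / (lam i + ‖E‖)) * (ut i ⬝ᵥ u i) ^ 2)
      ≤ Matrix.trace (Bdag * Cxx) ∧
    Matrix.trace (Bdag * Cxx)
      ≤ ∑ i ∈ Finset.univ.filter (fun i : Fin p => (i : ℕ) < k),
          ((lam i / (lam i - ‖E‖)) * (ut i ⬝ᵥ u i) ^ 2
            + ∑ j ∈ Finset.univ.filter (fun j : Fin p => j ≠ i),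
                (lam j / lamt i) * (ut i ⬝ᵥ u j) ^ 2) := by
  set F := Finset.univ.filter (fun i : Fin p => (i : ℕ) < k)
  have hweyl (i : Fin p) : lamt i ≤ lam i + ‖E‖ ∧ lam i - ‖E‖ ≤ lamt i := by
    have h : |lam i - lamt i| ≤ ‖E‖ := by
      simpa only [hE, hCxx, hemp, spectralSum] using
        abs_sub_le_l2_opNorm_sub_of_spectralSum hu_orth hut_orth hlam_anti hlamt_anti i
    constructor <;> linarith [abs_sub_le_iff.mp h]
  have hlamt_F (i) (hi : i ∈ F) : 0 < lamt i := hlamt_pos i (Finset.mem_filter.mp hi).2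
  have hE_lt (i) (hi : i ∈ F) : ‖E‖ < lam i :=
    hEk.trans_le <| hlam_anti _ _ <| Fin.le_def.mpr <|
      Nat.le_sub_one_of_lt (Finset.mem_filter.mp hi).2
  have hBdag_eq : Bdag = spectralSum F lamt⁻¹ ut :=
    hBdag.unique <| hXk ▸ isMoorePenrose_spectralSum_inv hut_orth fun i hi => (hlamt_F i hi).ne'
  have htrace : trace (Bdag * Cxx) = ∑ i ∈ F, ∑ j, lam j / lamt i * (ut i ⬝ᵥ u j) ^ 2 := by
    rw [hBdag_eq, hCxx, ← spectralSum, trace_spectralSum_mul_spectralSum]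
    simp only [Pi.inv_apply, div_eq_inv_mul, mul_comm]
  rw [htrace]
  refine ⟨Finset.sum_le_sum fun i hi => ?_, Finset.sum_le_sum fun i hi => ?_⟩
  · exact div_add_mul_le_sum_div_mul hlam_nonneg (fun j => sq_nonneg (ut i ⬝ᵥ u j))
      (hlamt_F i hi) (hweyl i).1
  · exact sum_div_mul_le_div_sub_mul_add (hlam_nonneg i) (sq_nonneg _)
      (sub_pos.mpr (hE_lt i hi)) (hweyl i).2
end

section
/- Let X ∈ ℝ^{n×p} with n < p and rank(X) = n, and let C_xx ∈ ℝ^{p×p} be symmetric positive definite (smallest eigenvalue λ_p > 0). For each m, let x₀^{(m)} = v + δ_m where v lies in the row space of X, δ_m ∉ row space of X, and δ_m → 0 as m → ∞; let X̃_m ∈ ℝ^{(n+1)×p} be X with the row (x₀^{(m)})ᵀ appended. Then the smallest nonzero eigenvalue of X̃_mᵀX̃_m tends to 0 as m → ∞, tr((X̃_mᵀX̃_m)^† C_xx) → ∞, and consequently the risk of the minimum-norm OLS estimator β̂_m = X̃_m^† Ỹ_m trained on the poisoned data (X̃_m, Ỹ_m) with Ỹ_m = X̃_m β + ε̃, ε̃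 ~ N(0, σ²I_{n+1}), σ > 0, tends to infinity. -/
/-!
Appending the row `v + δ` with `v` in the row space of `X` gives `X̃ w = (0, …, 0, δ ⬝ w)` for
every `w ∈ ker X`. Since `ker X` has codimension at most `n`, it meets the span of the top `n + 1`
eigenvectors of `X̃ᵀX̃` nontrivially, and on that span the Rayleigh quotient is at least the
`(n + 1)`-st eigenvalue `λ`; hence `λ ≤ ‖δ‖² → 0` (Courant–Fischer). The pseudoinverse is
`(X̃ᵀX̃)^† = ∑ λⱼ⁻¹ uⱼuⱼᵀ`, so `tr((X̃ᵀX̃)^† C) ≥ λ_min(C) / λ → ∞`. Integrating out `e`, `z` and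
`ε` in turn gives the exact risk `‖Csqrtᵀ(X̃^†X̃β − β)‖² + σ² tr(X̃^†X̃^†ᵀ C) + σ²`, and
`X̃^†X̃^†ᵀ = (X̃ᵀX̃)^†`, so the risk is at least `σ²` times that trace.
-/

open Matrix MeasureTheory ProbabilityTheory Filter
open scoped BigOperators NNReal Topology

namespace IsMoorePenrose

variable {m n : Type*} [Fintype m] [Fintype n] {A : Matrix m n ℝ}

theorem unique_s11 {P Q : Matrix n m ℝ} (hP : IsMoorePenrose A P) (hQ : IsMoorePenrose A Q) :
    P = Q := by
  obtain ⟨hP₁, hP₂, hP₃, hP₄⟩ := hP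
  obtain ⟨hQ₁, hQ₂, hQ₃, hQ₄⟩ := hQ
  have hAP : A * P = A * Q :=
    calc A * P = (A * Q)ᵀ * (A * P)ᵀ := by rw [hQ₃, hP₃, ← Matrix.mul_assoc, hQ₁]
      _ = (A * P * A * Q)ᵀ := by simp only [transpose_mul, Matrix.mul_assoc]
      _ = A * Q := by rw [hP₁, hQ₃]
  have hPA : P * A = Q * A :=
    calc P * A = (P * A)ᵀ * (Q * A)ᵀ := by
          rw [hP₄, hQ₄, Matrix.mul_assoc, ← Matrix.mul_assoc A, hQ₁]
      _ = (Q * (A * P * A))ᵀ := by simp only [transpose_mul, Matrix.mul_assoc]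
      _ = Q * A := by rw [hP₁, hQ₄]
  calc P = P * A * P := hP₂.symm
    _ = Q * A * Q := by rw [Matrix.mul_assoc, hAP, ← Matrix.mul_assoc, hPA]
    _ = Q := hQ₂

theorem transpose_mul_self {D : Matrix n m ℝ} (h : IsMoorePenrose A D) :
    IsMoorePenrose (Aᵀ * A) (D * Dᵀ) := by
  obtain ⟨h₁, h₂, h₃, h₄⟩ := h
  have hDA : Dᵀ * Aᵀ = A * D := by rw [← transpose_mul, h₃]
  have hAD : Aᵀ * Dᵀ = D * A := by rw [← transpose_mul, h₄]
  have hleft : Aᵀ * A * (D * Dᵀ) = D * A :=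
    calc Aᵀ * A * (D * Dᵀ) = Aᵀ * (Dᵀ * Aᵀ) * Dᵀ := by rw [hDA]; simp only [Matrix.mul_assoc]
      _ = D * (A * D * A) := by
          rw [← Matrix.mul_assoc, hAD, Matrix.mul_assoc, hAD]; simp only [Matrix.mul_assoc]
      _ = D * A := by rw [h₁]
  have hright : D * Dᵀ * (Aᵀ * A) = D * A :=
    calc D * Dᵀ * (Aᵀ * A) = D * (A * D * A) := by rw [← hDA]; simp only [Matrix.mul_assoc]
      _ = D * A := by rw [h₁]
  refine ⟨?_, ?_, by rw [hleft, h₄], by rw [hright, h₄]⟩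
  · rw [hleft, ← h₄, ← Matrix.mul_assoc, ← transpose_mul, ← Matrix.mul_assoc, h₁]
  · rw [hright, ← Matrix.mul_assoc, h₂]

end IsMoorePenrose

theorem dotProduct_self_nonneg {κ R : Type*} [Fintype κ] [Ring R] [LinearOrder R]
    [IsStrictOrderedRing R] (x : κ → R) : 0 ≤ x ⬝ᵥ x :=
  Fintype.sum_nonneg fun i ↦ mul_self_nonneg (x i)

theorem dotProduct_sq_le_dotProduct_self_mul {κ : Type*} [Fintype κ] (x y : κ → ℝ) :
    (x ⬝ᵥ y) ^ 2 ≤ (x ⬝ᵥ x) * (y ⬝ᵥ y) := by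
  simpa only [dotProduct, sq] using Finset.sum_mul_sq_le_sq_mul_sq Finset.univ x y

theorem dotProduct_transpose_mul_self_mulVec {m κ : Type*} [Fintype m] [Fintype κ]
    (A : Matrix m κ ℝ) (w : κ → ℝ) : w ⬝ᵥ (Aᵀ * A) *ᵥ w = (A *ᵥ w) ⬝ᵥ (A *ᵥ w) := by
  rw [← mulVec_mulVec, dotProduct_mulVec, vecMul_transpose]

theorem dotProduct_eq_zero_of_mem_span_rows {m κ : Type*} [Fintype m] [Fintype κ]
    {X : Matrix m κ ℝ} {x w : κ → ℝ} (hx : x ∈ Submodule.span ℝ (Set.range fun i ↦ X i))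
    (hw : X *ᵥ w = 0) : x ⬝ᵥ w = 0 := by
  obtain ⟨c, rfl⟩ := (Submodule.mem_span_range_iff_exists_fun ℝ).1 hx
  rw [← vecMul_eq_sum, ← dotProduct_mulVec, hw, dotProduct_zero]

theorem Matrix.exists_ne_zero_mulVec_eq_zero_of_card_lt {m n : Type*} [Fintype m] [Fintype n]
    {K : Type*} [Field K] (A : Matrix m n K) (h : Fintype.card m < Fintype.card n) :
    ∃ c ≠ 0, A *ᵥ c = 0 := by
  obtain ⟨c, hc, hc0⟩ := (Submodule.ne_bot_iff _).1 (LinearMap.ker_ne_bot_of_finrank_lt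
    (f := A.mulVecLin) (by simpa only [Module.finrank_fintype_fun_eq_card] using h))
  exact ⟨c, hc0, hc⟩

theorem of_snoc_mulVec {n : ℕ} {κ : Type*} [Fintype κ] (X : Matrix (Fin n) κ ℝ)
    (x w : κ → ℝ) :
    Matrix.of (Fin.snoc (fun i : Fin n ↦ fun j ↦ X i j) x) *ᵥ w = Fin.snoc (X *ᵥ w) (x ⬝ᵥ w) := by
  ext i
  refine Fin.lastCases ?_ (fun k ↦ ?_) i <;> simp [mulVec]

open scoped MatrixOrder Matrix.Norms.L2Operator in
theorem Matrix.PosDef.exists_pos_mul_dotProduct_self_le {n : Type*} [Fintype n] [DecidableEq n]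
    {C : Matrix n n ℝ} (hC : C.PosDef) : ∃ r > 0, ∀ w, r * (w ⬝ᵥ w) ≤ w ⬝ᵥ C *ᵥ w := by
  cases isEmpty_or_nonempty n
  · exact ⟨1, one_pos, fun w ↦ by simp [dotProduct]⟩
  obtain ⟨r, hr, hrC⟩ := (CFC.exists_pos_algebraMap_le_iff hC.isHermitian.isSelfAdjoint).2
    fun x hx ↦ hC.isStrictlyPositive.spectrum_pos hx
  refine ⟨r, hr, fun w ↦ ?_⟩
  simpa [sub_mulVec, Algebra.algebraMap_eq_smul_one, smul_mulVec] using
    (Matrix.le_iff.1 hrC).dotProduct_mulVec_nonneg w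

section OrthonormalFamily

variable {ι κ : Type*} {u : ι → κ → ℝ}

theorem transpose_sum_smul_vecMulVec [Fintype ι] (a : ι → ℝ) :
    (∑ j, a j • vecMulVec (u j) (u j))ᵀ = ∑ j, a j • vecMulVec (u j) (u j) := by
  simp only [transpose_sum, transpose_smul, transpose_vecMulVec]

theorem trace_sum_smul_vecMulVec_mul [Fintype ι] [Fintype κ] (a : ι → ℝ) (C : Matrix κ κ ℝ) :
    trace ((∑ j, a j • vecMulVec (u j) (u j)) * C) = ∑ j, a j * (u j ⬝ᵥ C *ᵥ u j) := by
  simp only [Finset.sum_mul, trace_sum, smul_mul, trace_smul, smul_eq_mul, trace_mul_comm _ C,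
    mul_vecMulVec, trace_vecMulVec, dotProduct_comm (C *ᵥ _)]

theorem mul_le_trace_sum_smul_vecMulVec_mul [Fintype ι] [Fintype κ] (hu : ∀ j, u j ⬝ᵥ u j = 1)
    {a : ι → ℝ} (ha : 0 ≤ a) {C : Matrix κ κ ℝ} {r : ℝ} (hr : 0 ≤ r)
    (hC : ∀ w, r * (w ⬝ᵥ w) ≤ w ⬝ᵥ C *ᵥ w) (i : ι) :
    r * a i ≤ trace ((∑ j, a j • vecMulVec (u j) (u j)) * C) := by
  have hterm (j : ι) : r * a j ≤ a j * (u j ⬝ᵥ C *ᵥ u j) := by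
    have hr' := hC (u j)
    rw [hu, mul_one] at hr'
    rw [mul_comm r]
    exact mul_le_mul_of_nonneg_left hr' (ha j)
  rw [trace_sum_smul_vecMulVec_mul]
  exact (hterm i).trans (Finset.single_le_sum
    (fun j _ ↦ (mul_nonneg hr (ha j)).trans (hterm j)) (Finset.mem_univ i))

theorem sum_smul_vecMulVec_mul_sum_smul_vecMulVec [Fintype ι] [Fintype κ] [DecidableEq ι]
    (hu : ∀ i j, u i ⬝ᵥ u j = if i = j then 1 else 0) (a b : ι → ℝ) :
    (∑ j, a j • vecMulVec (u j) (u j)) * (∑ j, b j • vecMulVec (u j) (u j)) =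
      ∑ j, (a j * b j) • vecMulVec (u j) (u j) := by
  rw [Finset.sum_mul]
  refine Finset.sum_congr rfl fun j _ ↦ ?_
  simp [Finset.mul_sum, vecMulVec_mul_vecMulVec, hu, smul_smul, mul_comm, apply_ite]

theorem isMoorePenrose_sum_smul_vecMulVec [Fintype ι] [Fintype κ] [DecidableEq ι]
    (hu : ∀ i j, u i ⬝ᵥ u j = if i = j then 1 else 0) (lam : ι → ℝ) :
    IsMoorePenrose (∑ j, lam j • vecMulVec (u j) (u j))
      (∑ j, (lam j)⁻¹ • vecMulVec (u j) (u j)) := by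
  have hinv (j : ι) : (lam j)⁻¹ * lam j * (lam j)⁻¹ = (lam j)⁻¹ := by
    simpa using mul_inv_mul_cancel (lam j)⁻¹
  -- `0⁻¹ = 0`, so zero eigenvalues stay zero, as they must in a pseudoinverse
  simp only [IsMoorePenrose, sum_smul_vecMulVec_mul_sum_smul_vecMulVec hu,
    transpose_sum_smul_vecMulVec, mul_inv_mul_cancel, hinv, and_self]

theorem sum_smul_vecMulVec_mulVec [Fintype ι] [Fintype κ] [DecidableEq ι]
    (hu : ∀ i j, u i ⬝ᵥ u j = if i = j then 1 else 0) (lam : ι → ℝ) (i : ι) :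
    (∑ j, lam j • vecMulVec (u j) (u j)) *ᵥ u i = lam i • u i := by
  simp [sum_mulVec, smul_mulVec, vecMulVec_mulVec, hu]

theorem nonneg_of_transpose_mul_self_eq_sum_smul_vecMulVec [Fintype ι] [Fintype κ]
    [DecidableEq ι] {m : Type*} [Fintype m] (hu : ∀ i j, u i ⬝ᵥ u j = if i = j then 1 else 0)
    {A : Matrix m κ ℝ} {lam : ι → ℝ}
    (h : Aᵀ * A = ∑ j, lam j • vecMulVec (u j) (u j)) (i : ι) : 0 ≤ lam i := by
  have hlam : lam i = (A *ᵥ u i) ⬝ᵥ (A *ᵥ u i) := by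
    rw [← dotProduct_transpose_mul_self_mulVec, h, sum_smul_vecMulVec_mulVec hu, dotProduct_smul,
      hu, if_pos rfl, smul_eq_mul, mul_one]
  exact hlam ▸ dotProduct_self_nonneg _

theorem sum_smul_comp_dotProduct_sum_smul_comp [Fintype κ] [DecidableEq ι]
    (hu : ∀ i j, u i ⬝ᵥ u j = if i = j then 1 else 0) {τ : Type*} [Fintype τ] {e : τ → ι}
    (he : Function.Injective e) (a b : τ → ℝ) :
    (∑ t, a t • u (e t)) ⬝ᵥ (∑ t, b t • u (e t)) = ∑ t, a t * b t := by
  classical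
  simp [sum_dotProduct, dotProduct_sum, hu, he.eq_iff, mul_comm]

theorem mul_dotProduct_self_le_dotProduct_sum_smul_vecMulVec_mulVec [Fintype ι] [Fintype κ]
    [DecidableEq ι] (hu : ∀ i j, u i ⬝ᵥ u j = if i = j then 1 else 0) {τ : Type*} [Fintype τ]
    {e : τ → ι} (he : Function.Injective e) {lam : ι → ℝ} {c : ℝ} (hc : ∀ t, c ≤ lam (e t))
    (a : τ → ℝ) :
    c * ((∑ t, a t • u (e t)) ⬝ᵥ (∑ t, a t • u (e t))) ≤
      (∑ t, a t • u (e t)) ⬝ᵥ (∑ j, lam j • vecMulVec (u j) (u j)) *ᵥ ∑ t, a t • u (e t) := by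
  have hM : (∑ j, lam j • vecMulVec (u j) (u j)) *ᵥ ∑ t, a t • u (e t) =
      ∑ t, (lam (e t) * a t) • u (e t) := by
    simp [mulVec_sum, mulVec_smul, sum_smul_vecMulVec_mulVec hu, smul_smul, mul_comm]
  rw [hM, sum_smul_comp_dotProduct_sum_smul_comp hu he,
    sum_smul_comp_dotProduct_sum_smul_comp hu he, Finset.mul_sum]
  exact Finset.sum_le_sum fun t _ ↦ by nlinarith [hc t, mul_self_nonneg (a t)]

end OrthonormalFamily

theorem eigenvalue_le_dotProduct_self_of_snoc_row {n p : ℕ} {κ : Type*} [Fintype κ]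
    (hnp : n < p) {X : Matrix (Fin n) κ ℝ} {v δ : κ → ℝ}
    (hv : v ∈ Submodule.span ℝ (Set.range fun i ↦ X i)) {lam : Fin p → ℝ} (hlam : Antitone lam)
    {u : Fin p → κ → ℝ} (hu : ∀ i j, u i ⬝ᵥ u j = if i = j then 1 else 0)
    (hdec : (Matrix.of (Fin.snoc (fun i : Fin n ↦ fun j ↦ X i j) (v + δ)))ᵀ *
        Matrix.of (Fin.snoc (fun i : Fin n ↦ fun j ↦ X i j) (v + δ)) =
      ∑ j, lam j • vecMulVec (u j) (u j)) :
    lam ⟨n, hnp⟩ ≤ δ ⬝ᵥ δ := by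
  set Xt := Matrix.of (Fin.snoc (fun i : Fin n ↦ fun j ↦ X i j) (v + δ))
  set e : Fin (n + 1) → Fin p := Fin.castLE hnp
  -- `X` restricted to the span of `u 0, …, u n` maps an `(n + 1)`-dimensional space to `ℝⁿ`
  obtain ⟨c, hc0, hc⟩ :=
    (X * (Matrix.of fun t ↦ u (e t))ᵀ).exists_ne_zero_mulVec_eq_zero_of_card_lt (by simp)
  set w := ∑ t, c t • u (e t)
  have hXw : X *ᵥ w = 0 := by
    rw [← hc, ← mulVec_mulVec, mulVec_transpose, vecMul_eq_sum]
    rfl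
  have hww : w ⬝ᵥ w = c ⬝ᵥ c :=
    sum_smul_comp_dotProduct_sum_smul_comp hu (Fin.castLE_injective hnp) c c
  have hquad : w ⬝ᵥ (Xtᵀ * Xt) *ᵥ w = (δ ⬝ᵥ w) ^ 2 := by
    rw [dotProduct_transpose_mul_self_mulVec, of_snoc_mulVec, hXw, add_dotProduct,
      dotProduct_eq_zero_of_mem_span_rows hv hXw, zero_add]
    simp [dotProduct, Fin.sum_univ_castSucc, sq]
  have hlow := mul_dotProduct_self_le_dotProduct_sum_smul_vecMulVec_mulVec hu
    (Fin.castLE_injective hnp) (c := lam ⟨n, hnp⟩)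
    (fun t ↦ hlam (Fin.le_def.2 (Nat.lt_succ_iff.1 t.isLt))) c
  rw [← hdec, hquad] at hlow
  have hpos : 0 < w ⬝ᵥ w := by
    rw [hww]
    exact (dotProduct_self_nonneg c).lt_of_ne (Ne.symm (mt dotProduct_self_eq_zero.1 hc0))
  exact le_of_mul_le_mul_right (hlow.trans (dotProduct_sq_le_dotProduct_self_mul δ w)) hpos

theorem integral_sq_eq_variance_add_sq {Ω : Type*} [MeasurableSpace Ω] {P : Measure Ω}
    [IsProbabilityMeasure P] {Y : Ω → ℝ} (hY : MemLp Y 2 P) :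
    ∫ ω, Y ω ^ 2 ∂P = Var[Y; P] + (∫ ω, Y ω ∂P) ^ 2 := by
  rw [variance_eq_sub hY]
  simp

theorem add_mulVec_dotProduct_self {ι κ : Type*} [Fintype ι] [Fintype κ] (d : κ → ℝ)
    (M : Matrix κ ι ℝ) (z : ι → ℝ) :
    (d + M *ᵥ z) ⬝ᵥ (d + M *ᵥ z) = ∑ i, (d i + M i ⬝ᵥ z) ^ 2 := by
  simp only [dotProduct, sq]
  rfl

section ProductMeasure

variable {ι : Type*} [Fintype ι] {μ : Measure ℝ} [IsProbabilityMeasure μ]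

theorem memLp_dotProduct_pi (hμ : MemLp id 2 μ) (a : ι → ℝ) :
    MemLp (fun z ↦ a ⬝ᵥ z) 2 (Measure.pi fun _ ↦ μ) :=
  memLp_finsetSum _ fun i _ ↦
    (hμ.comp_measurePreserving (measurePreserving_eval _ i)).const_mul (a i)

theorem integral_dotProduct_pi (hμ : Integrable id μ) (a : ι → ℝ) :
    ∫ z, a ⬝ᵥ z ∂(Measure.pi fun _ ↦ μ) = (∑ i, a i) * ∫ x, x ∂μ := by
  simp only [dotProduct]
  rw [integral_finsetSum _ fun i _ ↦ (integrable_comp_eval (f := fun x ↦ x) hμ).const_mul (a i)]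
  simp [integral_const_mul, integral_comp_eval (μ := fun _ ↦ μ) (f := fun x ↦ x)
    aestronglyMeasurable_id, Finset.sum_mul]

theorem variance_dotProduct_pi (hμ : MemLp id 2 μ) (a : ι → ℝ) :
    Var[fun z ↦ a ⬝ᵥ z; Measure.pi fun _ ↦ μ] = Var[id; μ] * (a ⬝ᵥ a) := by
  have h := variance_sum_pi (μ := fun _ : ι ↦ μ) (X := fun i x ↦ a i * x)
    fun i ↦ hμ.const_mul (a i)
  have hsum : (∑ i, fun z : ι → ℝ ↦ a i * z i) = fun z ↦ a ⬝ᵥ z := by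
    ext z; simp [dotProduct]
  rw [hsum] at h
  rw [h, dotProduct, Finset.mul_sum]
  refine Finset.sum_congr rfl fun i _ ↦ ?_
  rw [show (fun x ↦ a i * x) = fun x ↦ a i * id x from rfl, variance_const_mul]
  ring

theorem integral_add_dotProduct_sq_pi (hμ : MemLp id 2 μ) (hmean : ∫ x, x ∂μ = 0) (c : ℝ)
    (a : ι → ℝ) :
    ∫ z, (c + a ⬝ᵥ z) ^ 2 ∂(Measure.pi fun _ ↦ μ) = c ^ 2 + Var[id; μ] * (a ⬝ᵥ a) := by
  have ha := memLp_dotProduct_pi hμ a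
  have hY : MemLp (fun z ↦ c + a ⬝ᵥ z) 2 (Measure.pi fun _ ↦ μ) := (memLp_const c).add ha
  rw [integral_sq_eq_variance_add_sq hY,
    variance_const_add ha.aestronglyMeasurable, variance_dotProduct_pi hμ,
    integral_add (integrable_const c) (ha.integrable one_le_two),
    integral_dotProduct_pi (hμ.integrable one_le_two), hmean]
  simp only [integral_const, probReal_univ, smul_eq_mul, one_mul, mul_zero, add_zero]
  ring

theorem integrable_add_dotProduct_sq_pi (hμ : MemLp id 2 μ) (c : ℝ) (a : ι → ℝ) :
    Integrable (fun z ↦ (c + a ⬝ᵥ z) ^ 2) (Measure.pi fun _ ↦ μ) :=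
  ((memLp_const c).add (memLp_dotProduct_pi hμ a)).integrable_sq

theorem integrable_add_mulVec_dotProduct_self_pi {κ : Type*} [Fintype κ] (hμ : MemLp id 2 μ)
    (d : κ → ℝ) (M : Matrix κ ι ℝ) :
    Integrable (fun z ↦ (d + M *ᵥ z) ⬝ᵥ (d + M *ᵥ z)) (Measure.pi fun _ ↦ μ) := by
  simp_rw [add_mulVec_dotProduct_self]
  exact integrable_finsetSum _ fun i _ ↦ integrable_add_dotProduct_sq_pi hμ (d i) (M i)

theorem integral_add_mulVec_dotProduct_self_pi {κ : Type*} [Fintype κ] (hμ : MemLp id 2 μ)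
    (hmean : ∫ x, x ∂μ = 0) (d : κ → ℝ) (M : Matrix κ ι ℝ) :
    ∫ z, (d + M *ᵥ z) ⬝ᵥ (d + M *ᵥ z) ∂(Measure.pi fun _ ↦ μ) =
      d ⬝ᵥ d + Var[id; μ] * trace (M * Mᵀ) := by
  simp_rw [add_mulVec_dotProduct_self]
  rw [integral_finsetSum _ fun i _ ↦ integrable_add_dotProduct_sq_pi hμ (d i) (M i)]
  simp only [integral_add_dotProduct_sq_pi hμ hmean]
  simp [Finset.sum_add_distrib, Finset.mul_sum, trace, mul_apply, dotProduct, sq]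

end ProductMeasure

theorem integral_sub_sq_gaussianReal (q : ℝ) (v : ℝ≥0) :
    ∫ e, (q - e) ^ 2 ∂gaussianReal 0 v = q ^ 2 + v := by
  have hid : MemLp id 2 (gaussianReal 0 v) := memLp_id_gaussianReal 2
  have hY : MemLp (fun e ↦ q - e) 2 (gaussianReal 0 v) := (memLp_const q).sub hid
  rw [integral_sq_eq_variance_add_sq hY,
    variance_const_sub (X := fun e ↦ e) aestronglyMeasurable_id, variance_fun_id_gaussianReal,
    integral_sub (integrable_const q) (g := fun e ↦ e) (hid.integrable one_le_two),
    integral_const, integral_id_gaussianReal]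
  simp only [probReal_univ, smul_eq_mul, one_mul, sub_zero]
  ring

theorem integral_sq_prediction_error_gaussian {ι κ κ' : Type*} [Fintype ι] [Fintype κ]
    [Fintype κ'] (A : Matrix κ ι ℝ) (b : ι → ℝ) (β : κ → ℝ) (C : Matrix κ κ' ℝ) (v : ℝ≥0) :
    ∫ ε, (∫ z, (∫ e, ((C *ᵥ z) ⬝ᵥ (A *ᵥ (b + ε)) - ((C *ᵥ z) ⬝ᵥ β + e)) ^ 2
        ∂gaussianReal 0 v) ∂(Measure.pi fun _ : κ' ↦ gaussianReal 0 1))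
        ∂(Measure.pi fun _ : ι ↦ gaussianReal 0 v) =
      (Cᵀ *ᵥ (A *ᵥ b - β)) ⬝ᵥ (Cᵀ *ᵥ (A *ᵥ b - β)) + v * trace (A * Aᵀ * (C * Cᵀ)) + v := by
  have hmean (s : ℝ≥0) : ∫ x, x ∂gaussianReal 0 s = 0 := integral_id_gaussianReal
  have hid (s : ℝ≥0) : MemLp id 2 (gaussianReal 0 s) := memLp_id_gaussianReal 2
  have hinner (ε : ι → ℝ) (z : κ' → ℝ) :
      ∫ e, ((C *ᵥ z) ⬝ᵥ (A *ᵥ (b + ε)) - ((C *ᵥ z) ⬝ᵥ β + e)) ^ 2 ∂gaussianReal 0 v =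
        ((Cᵀ *ᵥ (A *ᵥ (b + ε) - β)) ⬝ᵥ z) ^ 2 + v := by
    have hadj (y : κ → ℝ) : (Cᵀ *ᵥ y) ⬝ᵥ z = (C *ᵥ z) ⬝ᵥ y := by
      rw [mulVec_transpose, ← dotProduct_mulVec, dotProduct_comm]
    rw [← integral_sub_sq_gaussianReal, hadj, dotProduct_sub]
    congr with e
    ring
  have hmiddle (ε : ι → ℝ) :
      ∫ z, ((Cᵀ *ᵥ (A *ᵥ (b + ε) - β)) ⬝ᵥ z) ^ 2 + v ∂(Measure.pi fun _ ↦ gaussianReal 0 1) =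
        (Cᵀ *ᵥ (A *ᵥ b - β) + (Cᵀ * A) *ᵥ ε) ⬝ᵥ (Cᵀ *ᵥ (A *ᵥ b - β) + (Cᵀ * A) *ᵥ ε) + v := by
    have hw : Cᵀ *ᵥ (A *ᵥ (b + ε) - β) = Cᵀ *ᵥ (A *ᵥ b - β) + (Cᵀ * A) *ᵥ ε := by
      rw [← mulVec_mulVec, ← mulVec_add, mulVec_add]
      abel_nf
    have hint := integrable_add_dotProduct_sq_pi (hid 1) 0 (Cᵀ *ᵥ (A *ᵥ (b + ε) - β))
    have hval := integral_add_dotProduct_sq_pi (hid 1) (hmean 1) 0 (Cᵀ *ᵥ (A *ᵥ (b + ε) - β))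
    simp only [zero_add] at hint hval
    rw [integral_add hint (integrable_const _), hval, integral_const, probReal_univ, one_smul,
      variance_id_gaussianReal, NNReal.coe_one, hw]
    ring
  simp_rw [hinner, hmiddle]
  rw [integral_add (integrable_add_mulVec_dotProduct_self_pi (hid v) _ _) (integrable_const _),
    integral_add_mulVec_dotProduct_self_pi (hid v) (hmean v), variance_id_gaussianReal,
    integral_const, probReal_univ, one_smul, transpose_mul, transpose_transpose,
    Matrix.mul_assoc, ← Matrix.mul_assoc A, trace_mul_comm, Matrix.mul_assoc]

theorem data_poisoning_attack_blows_up_ols_risk_general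
    (n p : ℕ) (hnp : n < p)
    (X : Matrix (Fin n) (Fin p) ℝ)
    (β : Fin p → ℝ) (σ : ℝ) (hσ : 0 < σ)
    (Cxx Csqrt : Matrix (Fin p) (Fin p) ℝ)
    (hCxx : Cxx = Csqrt * Csqrtᵀ) (hCpd : Cxx.PosDef)
    -- the row space of X
    (S : Submodule ℝ (Fin p → ℝ))
    (hS : S = Submodule.span ℝ (Set.range fun i : Fin n => X i))
    -- the adversarial sequence x₀^{(m)} = v + δ_m
    (v : Fin p → ℝ) (hv : v ∈ S)
    (δ : ℕ → Fin p → ℝ)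
    (hδ0 : Tendsto δ atTop (𝓝 0))
    -- the poisoned data matrices
    (Xt : ℕ → Matrix (Fin (n + 1)) (Fin p) ℝ)
    (hXt : ∀ m, Xt m = Matrix.of (Fin.snoc (fun i : Fin n => fun j => X i j) (v + δ m)))
    -- eigendecompositions of X̃_mᵀX̃_m, sorted decreasingly; since rank X̃_m = n+1, the
    -- eigenvalues at positions 1,…,n+1 are positive and the remaining ones vanish
    (lams : ℕ → Fin p → ℝ) (us : ℕ → Fin p → Fin p → ℝ)
    (hlams_anti : ∀ m, ∀ i j : Fin p, i ≤ j → lams m j ≤ lams m i)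
    (hus_orth : ∀ m, ∀ i j, us m i ⬝ᵥ us m j = if i = j then (1 : ℝ) else 0)
    (hdec : ∀ m, (Xt m)ᵀ * Xt m = ∑ j, lams m j • vecMulVec (us m j) (us m j))
    (hpos : ∀ m, ∀ i : Fin p, (i : ℕ) ≤ n → 0 < lams m i)
    -- Moore–Penrose pseudoinverses of X̃_mᵀX̃_m and of X̃_m
    (Dag2 : ℕ → Matrix (Fin p) (Fin p) ℝ)
    (hDag2 : ∀ m, IsMoorePenrose ((Xt m)ᵀ * Xt m) (Dag2 m))
    (Xdag : ℕ → Matrix (Fin p) (Fin (n + 1)) ℝ)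
    (hXdag : ∀ m, IsMoorePenrose (Xt m) (Xdag m)) :
    -- the smallest nonzero eigenvalue of X̃_mᵀX̃_m tends to 0
    Tendsto (fun m => lams m ⟨n, hnp⟩) atTop (𝓝 0) ∧
    -- tr((X̃_mᵀX̃_m)^† C_xx) → ∞
    Tendsto (fun m => Matrix.trace (Dag2 m * Cxx)) atTop atTop ∧
    -- the risk of the min-norm OLS estimator trained on the poisoned data → ∞
    Tendsto (fun m =>
        ∫ ε : Fin (n + 1) → ℝ,
          (∫ z : Fin p → ℝ,
            (∫ e : ℝ,
                ((Csqrt *ᵥ z) ⬝ᵥ (Xdag m *ᵥ (Xt m *ᵥ β + ε))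
                  - ((Csqrt *ᵥ z) ⬝ᵥ β + e)) ^ 2
              ∂(gaussianReal 0 ⟨σ ^ 2, sq_nonneg σ⟩))
            ∂(Measure.pi fun _ : Fin p => gaussianReal 0 1))
          ∂(Measure.pi fun _ : Fin (n + 1) => gaussianReal 0 ⟨σ ^ 2, sq_nonneg σ⟩))
      atTop atTop := by
  subst hS
  have hlam_pos (m : ℕ) : 0 < lams m ⟨n, hnp⟩ := hpos m _ le_rfl
  have hlam_le (m : ℕ) : lams m ⟨n, hnp⟩ ≤ δ m ⬝ᵥ δ m :=
    eigenvalue_le_dotProduct_self_of_snoc_row hnp hv (fun i j h ↦ hlams_anti m i j h) (hus_orth m)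
      (hXt m ▸ hdec m)
  have hδδ : Tendsto (fun m ↦ δ m ⬝ᵥ δ m) atTop (𝓝 0) := by
    simpa [Function.comp_def] using ((continuous_id.dotProduct continuous_id).tendsto 0).comp hδ0
  have hlam_lim : Tendsto (fun m ↦ lams m ⟨n, hnp⟩) atTop (𝓝[>] 0) :=
    tendsto_nhdsWithin_iff.2
      ⟨squeeze_zero (fun m ↦ (hlam_pos m).le) hlam_le hδδ, .of_forall hlam_pos⟩
  obtain ⟨r, hr, hCr⟩ := hCpd.exists_pos_mul_dotProduct_self_le
  have htrace_ge (m : ℕ) : r * (lams m ⟨n, hnp⟩)⁻¹ ≤ trace (Dag2 m * Cxx) := by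
    rw [(hDag2 m).unique_s11 (hdec m ▸ isMoorePenrose_sum_smul_vecMulVec (hus_orth m) (lams m))]
    refine mul_le_trace_sum_smul_vecMulVec_mul (fun j ↦ by simpa using hus_orth m j j)
      (fun j ↦ inv_nonneg.2 ?_) hr.le hCr _
    exact nonneg_of_transpose_mul_self_eq_sum_smul_vecMulVec (hus_orth m) (hdec m) j
  have htrace : Tendsto (fun m ↦ trace (Dag2 m * Cxx)) atTop atTop :=
    tendsto_atTop_mono htrace_ge ((tendsto_inv_nhdsGT_zero.comp hlam_lim).const_mul_atTop hr)
  refine ⟨tendsto_nhds_of_tendsto_nhdsWithin hlam_lim, htrace,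
    tendsto_atTop_mono (fun m ↦ ?_) (htrace.const_mul_atTop (pow_pos hσ 2))⟩
  refine le_of_le_of_eq ?_ (integral_sq_prediction_error_gaussian (Xdag m) (Xt m *ᵥ β) β Csqrt
    ⟨σ ^ 2, sq_nonneg σ⟩).symm
  rw [(hDag2 m).unique_s11 (hXdag m).transpose_mul_self, hCxx]
  change _ ≤ _ + σ ^ 2 * _ + σ ^ 2
  nlinarith [dotProduct_self_nonneg (Csqrtᵀ *ᵥ (Xdag m *ᵥ (Xt m *ᵥ β) - β))]

theorem data_poisoning_attack_blows_up_ols_risk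
    (n p : ℕ) (hn : 0 < n) (hnp : n < p)
    (X : Matrix (Fin n) (Fin p) ℝ) (hrank : X.rank = n)
    (β : Fin p → ℝ) (σ : ℝ) (hσ : 0 < σ)
    (Cxx Csqrt : Matrix (Fin p) (Fin p) ℝ)
    (hCxx : Cxx = Csqrt * Csqrtᵀ) (hCpd : Cxx.PosDef)
    -- the row space of X
    (S : Submodule ℝ (Fin p → ℝ))
    (hS : S = Submodule.span ℝ (Set.range fun i : Fin n => X i))
    -- the adversarial sequence x₀^{(m)} = v + δ_m
    (v : Fin p → ℝ) (hv : v ∈ S)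
    (δ : ℕ → Fin p → ℝ) (hδnot : ∀ m, δ m ∉ S)
    (hδ0 : Tendsto δ atTop (𝓝 0))
    -- the poisoned data matrices
    (Xt : ℕ → Matrix (Fin (n + 1)) (Fin p) ℝ)
    (hXt : ∀ m, Xt m = Matrix.of (Fin.snoc (fun i : Fin n => fun j => X i j) (v + δ m)))
    -- eigendecompositions of X̃_mᵀX̃_m, sorted decreasingly; since rank X̃_m = n+1, the
    -- eigenvalues at positions 1,…,n+1 are positive and the remaining ones vanish
    (lams : ℕ → Fin p → ℝ) (us : ℕ → Fin p → Fin p → ℝ)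
    (hlams_anti : ∀ m, ∀ i j : Fin p, i ≤ j → lams m j ≤ lams m i)
    (hus_orth : ∀ m, ∀ i j, us m i ⬝ᵥ us m j = if i = j then (1 : ℝ) else 0)
    (hdec : ∀ m, (Xt m)ᵀ * Xt m = ∑ j, lams m j • vecMulVec (us m j) (us m j))
    (hpos : ∀ m, ∀ i : Fin p, (i : ℕ) ≤ n → 0 < lams m i)
    (hzero : ∀ m, ∀ i : Fin p, n < (i : ℕ) → lams m i = 0)
    -- Moore–Penrose pseudoinverses of X̃_mᵀX̃_m and of X̃_m
    (Dag2 : ℕ → Matrix (Fin p) (Fin p) ℝ)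
    (hDag2 : ∀ m, IsMoorePenrose ((Xt m)ᵀ * Xt m) (Dag2 m))
    (Xdag : ℕ → Matrix (Fin p) (Fin (n + 1)) ℝ)
    (hXdag : ∀ m, IsMoorePenrose (Xt m) (Xdag m)) :
    -- the smallest nonzero eigenvalue of X̃_mᵀX̃_m tends to 0
    Tendsto (fun m => lams m ⟨n, hnp⟩) atTop (𝓝 0) ∧
    -- tr((X̃_mᵀX̃_m)^† C_xx) → ∞
    Tendsto (fun m => Matrix.trace (Dag2 m * Cxx)) atTop atTop ∧
    -- the risk of the min-norm OLS estimator trained on the poisoned data → ∞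
    Tendsto (fun m =>
        ∫ ε : Fin (n + 1) → ℝ,
          (∫ z : Fin p → ℝ,
            (∫ e : ℝ,
                ((Csqrt *ᵥ z) ⬝ᵥ (Xdag m *ᵥ (Xt m *ᵥ β + ε))
                  - ((Csqrt *ᵥ z) ⬝ᵥ β + e)) ^ 2
              ∂(gaussianReal 0 ⟨σ ^ 2, sq_nonneg σ⟩))
            ∂(Measure.pi fun _ : Fin p => gaussianReal 0 1))
          ∂(Measure.pi fun _ : Fin (n + 1) => gaussianReal 0 ⟨σ ^ 2, sq_nonneg σ⟩))
      atTop atTop :=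
  data_poisoning_attack_blows_up_ols_risk_general n p hnp X β σ hσ Cxx Csqrt hCxx hCpd S hS v hv δ
    hδ0 Xt hXt lams us hlams_anti hus_orth hdec hpos Dag2 hDag2 Xdag hXdag
end
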